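/- arXiv:2206.02224 — 3 statements merged into one kernel-verified Lean document; each statement's English description precedes it below -/
import Mathlib

section
/- For any sequence of positive reals (or integers) x_1,...,x_p with x_1+...+x_p = k, and any s ≥ 1, the sum over all tuples (i_1,...,i_s) ∈ [p]^s of the product ∏_{j=1}^s (x_{i_j} - n(i,j)), where n(i,j) is the number of indices m ≤ j with i_m = i_j, equals the falling factorial (k-p)(k-p-1)⋯(k-p-s+1). -/
/-!
Induct on `s`, splitting off the last entry `a` of the tuple. The first `s` factors of the
product only see the first `s` entries, and the last factor is `x a - (c_a + 1)`, where `c_a`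
counts the earlier occurrences of `a`. Summing this last factor over `a` gives
`∑ x - p - s = k - p - s`, because the counts `c_a` add up to `s`; this is the next factor
of the falling factorial.
-/

open Finset

namespace Fin

variable {R α : Type*} [CommRing R] [DecidableEq α] {s : ℕ}

/-- The paper's `Prod_X(i)`. -/
def occurrenceProd (x : α → R) (i : Fin s → α) : R :=
  ∏ j, (x (i j) - #{m | m ≤ j ∧ i m = i j})

lemma card_filter_le_castSucc_snoc (i : Fin s → α) (a : α) (j : Fin s) :
    #{m : Fin (s + 1) | m ≤ j.castSucc ∧ (snoc i a : Fin (s + 1) → α) m = i j} =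
      #{m | m ≤ j ∧ i m = i j} := by
  rw [card_filter, card_filter, sum_univ_castSucc]
  simp [castSucc_le_castSucc_iff, (castSucc_lt_last j).not_ge]

lemma card_filter_le_last_snoc (i : Fin s → α) (a : α) :
    #{m : Fin (s + 1) | m ≤ last s ∧ (snoc i a : Fin (s + 1) → α) m = a} =
      #{m | i m = a} + 1 := by
  rw [card_filter, card_filter, sum_univ_castSucc]
  simp [le_last]

lemma occurrenceProd_snoc (x : α → R) (i : Fin s → α) (a : α) :
    occurrenceProd x (snoc i a) = occurrenceProd x i * (x a - (#{m | i m = a} + 1)) := by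
  rw [occurrenceProd, prod_univ_castSucc]
  simp only [snoc_castSucc, snoc_last, card_filter_le_castSucc_snoc, card_filter_le_last_snoc]
  push_cast
  rfl

lemma sum_sub_card_fiber_succ [Fintype α] (x : α → R) (i : Fin s → α) :
    ∑ a, (x a - (#{m | i m = a} + 1 : R)) = ∑ a, x a - Fintype.card α - s := by
  have h_fibers : ∑ a, (#{m | i m = a} : R) = s := by
    rw [← Nat.cast_sum, ← card_eq_sum_card_fiberwise (fun m _ ↦ mem_univ (i m)),
      card_univ, Fintype.card_fin]
  simp only [sum_sub_distrib, sum_add_distrib, h_fibers, Finset.sum_const, Finset.card_univ,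
    nsmul_one]
  ring

theorem sum_occurrenceProd [Fintype α] (x : α → R) (s : ℕ) :
    ∑ i : Fin s → α, occurrenceProd x i =
      ∏ t ∈ range s, (∑ a, x a - Fintype.card α - t) := by
  induction s with
  | zero => simp [occurrenceProd]
  | succ s ih =>
    rw [← (snocEquiv fun _ ↦ α).sum_comp, Fintype.sum_prod_type_right, prod_range_succ, ← ih,
      sum_mul]
    refine sum_congr rfl fun i _ ↦ ?_
    simp only [snocEquiv, Equiv.coe_fn_mk, occurrenceProd_snoc, ← mul_sum,
      sum_sub_card_fiber_succ]

end Fin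

theorem stmt0_general (p s : ℕ) (k : ℤ) (x : Fin p → ℤ)
    (hx : ∑ i, x i = k) :
    ∑ i : Fin s → Fin p,
      ∏ j : Fin s,
        (x (i j) - (Finset.univ.filter (fun m : Fin s => m ≤ j ∧ i m = i j)).card)
    = ∏ t ∈ Finset.range s, (k - (p : ℤ) - (t : ℤ)) := by
  simpa [hx, Fin.occurrenceProd] using Fin.sum_occurrenceProd x s

/-- Falling-factorial sum identity over tuples. -/
theorem stmt0 (p s : ℕ) (hs : 1 ≤ s) (k : ℤ) (x : Fin p → ℤ)
    (hx : ∑ i, x i = k) :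
    ∑ i : Fin s → Fin p,
      ∏ j : Fin s,
        (x (i j) - (Finset.univ.filter (fun m : Fin s => m ≤ j ∧ i m = i j)).card)
    = ∏ t ∈ Finset.range s, (k - (p : ℤ) - (t : ℤ)) :=
  stmt0_general p s k x hx
end

section
/- The number of non-crossing partitions of [k] with exactly α_i parts of size i for each i (where ∑ i·α_i = k and a = ∑ α_i) equals C(k, a-1) · (a-1)!/(α_1!⋯α_k!). -/
/-!
Encode a non-crossing partition of `[k]` by the sequence `c` whose `j`-th entry is the size of
the block with least element `j` (and `0` if `j` is not the least element of a block).
Non-crossing partitions correspond exactly to the sequences whose partial sums dominate their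
lengths (Łukasiewicz words): the block starting last must be an initial segment of the elements
after its start, so the partition is rebuilt from right to left. Appending a `0` turns these into
dominating words of length `k + 1` and sum `k`, and by the cycle lemma exactly one of the
`k + 1` rotations of any word of length `k + 1` and sum `k` is dominating. Hence
`(k + 1) · #NP(α) · ∏ α_i!` counts the placements of `a` labelled letters into `k + 1`
positions, which is `(k + 1) · k · ⋯ · (k - a + 2) = (k + 1) · C(k, a - 1) · (a - 1)!`.
-/

open Finset
open scoped Classical

/-- A finset of finsets of `Fin k` is a partition of `[k]`. -/
def IsPartitionOf (k : ℕ) (P : Finset (Finset (Fin k))) : Prop :=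
  (∀ p ∈ P, p.Nonempty) ∧
  (∀ p ∈ P, ∀ q ∈ P, p ≠ q → Disjoint p q) ∧
  P.sup id = Finset.univ

/-- The partition is non-crossing. -/
def IsNonCrossing (k : ℕ) (P : Finset (Finset (Fin k))) : Prop :=
  ¬ ∃ a b c d : Fin k, a < b ∧ b < c ∧ c < d ∧
    ∃ p ∈ P, ∃ q ∈ P, p ≠ q ∧ a ∈ p ∧ c ∈ p ∧ b ∈ q ∧ d ∈ q

open Function

section InitialSegment

variable {α : Type*} [LinearOrder α] {W B B₁ B₂ : Finset α}

def IsInitialSegment (W B : Finset α) : Prop :=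
  B ⊆ W ∧ ∀ y ∈ W, ∀ x ∈ B, y ≤ x → y ∈ B

lemma IsInitialSegment.subset_or_subset (h₁ : IsInitialSegment W B₁)
    (h₂ : IsInitialSegment W B₂) : B₁ ⊆ B₂ ∨ B₂ ⊆ B₁ := by
  by_contra! h
  obtain ⟨x, hx₁, hx₂⟩ := not_subset.1 h.1
  obtain ⟨y, hy₂, hy₁⟩ := not_subset.1 h.2
  rcases le_total x y with hxy | hyx
  · exact hx₂ (h₂.2 x (h₁.1 hx₁) y hy₂ hxy)
  · exact hy₁ (h₁.2 y (h₂.1 hy₂) x hx₁ hyx)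

lemma IsInitialSegment.eq_of_card_eq (h₁ : IsInitialSegment W B₁)
    (h₂ : IsInitialSegment W B₂) (h : #B₁ = #B₂) : B₁ = B₂ := by
  rcases h₁.subset_or_subset h₂ with h₁₂ | h₂₁
  · exact eq_of_subset_of_card_le h₁₂ h.ge
  · exact (eq_of_subset_of_card_le h₂₁ h.le).symm

lemma exists_isInitialSegment_card_eq {s : ℕ} (hs : s ≤ #W) :
    ∃ B, IsInitialSegment W B ∧ #B = s := by
  induction s with
  | zero =>
    exact ⟨∅, ⟨empty_subset W, fun _ _ _ hx => absurd hx (notMem_empty _)⟩, card_empty⟩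
  | succ s ih =>
    obtain ⟨B, ⟨hBW, hB⟩, rfl⟩ := ih (by omega)
    have hne : (W \ B).Nonempty := by
      rw [← card_pos, card_sdiff_of_subset hBW]
      omega
    set b := (W \ B).min' hne
    obtain ⟨hbW, hbB⟩ := mem_sdiff.1 ((W \ B).min'_mem hne)
    refine ⟨insert b B, ⟨insert_subset hbW hBW, fun y hy x hx hyx => ?_⟩,
      card_insert_of_notMem hbB⟩
    rcases mem_insert.1 hx with rfl | hx
    · by_cases hyB : y ∈ B
      · exact mem_insert_of_mem hyB
      · rw [le_antisymm hyx ((W \ B).min'_le y (mem_sdiff.2 ⟨hy, hyB⟩))]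
        exact mem_insert_self _ _
    · exact mem_insert_of_mem (hB y hy x hx hyx)

end InitialSegment

section Partitions

variable {k : ℕ} {V B : Finset (Fin k)} {P Q : Finset (Finset (Fin k))} {p : Finset (Fin k)}
  {m : Fin k}

structure IsPartitionOn (V : Finset (Fin k)) (P : Finset (Finset (Fin k))) : Prop where
  nonempty : ∀ p ∈ P, p.Nonempty
  disjoint : ∀ p ∈ P, ∀ q ∈ P, p ≠ q → Disjoint p q
  sup_eq : P.sup id = V

lemma isPartitionOn_univ_iff : IsPartitionOn univ P ↔ IsPartitionOf k P :=
  ⟨fun h => ⟨h.1, h.2, h.3⟩, fun h => ⟨h.1, h.2.1, h.2.2⟩⟩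

namespace IsPartitionOn

lemma mem_iff (hP : IsPartitionOn V P) {x : Fin k} : x ∈ V ↔ ∃ p ∈ P, x ∈ p := by
  rw [← hP.sup_eq, mem_sup]
  rfl

lemma subset (hP : IsPartitionOn V P) (hp : p ∈ P) : p ⊆ V :=
  fun _ hx => hP.mem_iff.2 ⟨p, hp, hx⟩

lemma eq_of_mem_of_mem (hP : IsPartitionOn V P) {q : Finset (Fin k)} (hp : p ∈ P) (hq : q ∈ P)
    {x : Fin k} (hxp : x ∈ p) (hxq : x ∈ q) : p = q := by
  by_contra hpq
  exact disjoint_left.1 (hP.disjoint p hp q hq hpq) hxp hxq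

lemma eq_empty (hP : IsPartitionOn ∅ P) : P = ∅ :=
  eq_empty_of_forall_notMem fun p hp =>
    (hP.nonempty p hp).ne_empty (subset_empty.1 (hP.subset hp))

lemma erase (hP : IsPartitionOn V P) (hp : p ∈ P) : IsPartitionOn (V \ p) (P.erase p) where
  nonempty q hq := hP.nonempty q (mem_of_mem_erase hq)
  disjoint q hq r hr := hP.disjoint q (mem_of_mem_erase hq) r (mem_of_mem_erase hr)
  sup_eq := by
    ext x
    simp only [mem_sup, id, mem_erase, mem_sdiff, hP.mem_iff]
    constructor
    · rintro ⟨q, ⟨hqp, hq⟩, hxq⟩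
      exact ⟨⟨q, hq, hxq⟩, fun hxp => hqp (hP.eq_of_mem_of_mem hq hp hxq hxp)⟩
    · rintro ⟨⟨q, hq, hxq⟩, hxp⟩
      exact ⟨q, ⟨by rintro rfl; exact hxp hxq, hq⟩, hxq⟩

lemma insert (hP : IsPartitionOn (V \ B) P) (hB : B.Nonempty) (hBV : B ⊆ V) :
    IsPartitionOn V (insert B P) where
  nonempty q hq := by
    rcases mem_insert.1 hq with rfl | hq
    exacts [hB, hP.nonempty q hq]
  disjoint := by
    have hdisj : ∀ q ∈ P, Disjoint B q := fun q hq =>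
      disjoint_sdiff.mono_right (hP.subset hq)
    intro q hq r hr hqr
    rcases mem_insert.1 hq with rfl | hq <;> rcases mem_insert.1 hr with hrB | hr
    · exact absurd hrB.symm hqr
    · exact hdisj r hr
    · exact hrB ▸ (hdisj q hq).symm
    · exact hP.disjoint q hq r hr hqr
  sup_eq := by rw [sup_insert, hP.sup_eq, id, sup_eq_union, union_sdiff_of_subset hBV]

end IsPartitionOn

noncomputable def sizeAtMin (P : Finset (Finset (Fin k))) (j : Fin k) : ℕ :=
  ∑ p ∈ P.filter (fun p : Finset (Fin k) => IsLeast ↑p j), #p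

lemma IsPartitionOn.sizeAtMin_eq_card (hP : IsPartitionOn V P) (hp : p ∈ P)
    (hm : IsLeast (p : Set (Fin k)) m) : sizeAtMin P m = #p := by
  refine sum_eq_single_of_mem p (mem_filter.2 ⟨hp, hm⟩) fun q hq hqp => ?_
  obtain ⟨hq, hmq⟩ := mem_filter.1 hq
  exact absurd (hP.eq_of_mem_of_mem hq hp hmq.1 hm.1) hqp

lemma IsPartitionOn.sizeAtMin_ne_zero_iff (hP : IsPartitionOn V P) :
    sizeAtMin P m ≠ 0 ↔ ∃ p ∈ P, IsLeast (p : Set (Fin k)) m := by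
  refine ⟨fun h => ?_, fun ⟨p, hp, hm⟩ => ?_⟩
  · obtain ⟨p, hp, -⟩ := exists_ne_zero_of_sum_ne_zero h
    exact ⟨p, (mem_filter.1 hp).1, (mem_filter.1 hp).2⟩
  · rw [hP.sizeAtMin_eq_card hp hm]
    exact card_ne_zero.2 ⟨m, hm.1⟩

lemma sizeAtMin_eq_zero (h : ∀ p ∈ P, m ∉ p) : sizeAtMin P m = 0 :=
  sum_eq_zero fun p hp => absurd (mem_filter.1 hp).2.1 (h p (mem_filter.1 hp).1)

lemma sizeAtMin_insert (hB : IsLeast (B : Set (Fin k)) m) (hP : ∀ q ∈ P, m ∉ q) :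
    sizeAtMin (insert B P) = update (sizeAtMin P) m #B := by
  funext j
  rcases eq_or_ne j m with rfl | hjm
  · have hempty : P.filter (fun q : Finset (Fin k) => IsLeast ↑q j) = ∅ :=
      filter_eq_empty_iff.2 fun q hq hjq => hP q hq hjq.1
    rw [update_self, sizeAtMin, filter_insert, if_pos hB, hempty, insert_empty,
      sum_singleton]
  · rw [update_of_ne hjm, sizeAtMin, sizeAtMin, filter_insert,
      if_neg fun hj => hjm (hj.unique hB)]

lemma IsPartitionOn.sizeAtMin_erase (hP : IsPartitionOn V P) (hp : p ∈ P)
    (hm : IsLeast (p : Set (Fin k)) m) :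
    sizeAtMin (P.erase p) = update (sizeAtMin P) m 0 := by
  have hnotMem : ∀ q ∈ P.erase p, m ∉ q := fun q hq hmq =>
    ne_of_mem_erase hq (hP.eq_of_mem_of_mem (mem_of_mem_erase hq) hp hmq hm.1)
  rw [← insert_erase hp, sizeAtMin_insert hm hnotMem, erase_insert (notMem_erase p P),
    update_idem]
  exact (update_eq_self_iff.2 (sizeAtMin_eq_zero hnotMem).symm).symm

lemma IsPartitionOn.sum_sizeAtMin (hP : IsPartitionOn V P) (s : Finset (Fin k)) :
    ∑ j ∈ s, sizeAtMin P j
      = ∑ p ∈ P.filter (fun p : Finset (Fin k) => ∃ j ∈ s, IsLeast ↑p j), #p := by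
  simp only [sizeAtMin, sum_filter]
  rw [sum_comm]
  refine sum_congr rfl fun p hp => ?_
  have hleast := p.isLeast_min' (hP.nonempty p hp)
  have hiff : ∀ j, IsLeast (p : Set (Fin k)) j ↔ p.min' (hP.nonempty p hp) = j :=
    fun j => ⟨hleast.unique, by rintro rfl; exact hleast⟩
  simp only [hiff, sum_ite_eq, exists_eq_right']

structure IsDominatingOn (V : Finset (Fin k)) (c : Fin k → ℕ) : Prop where
  support_subset : ∀ j, c j ≠ 0 → j ∈ V
  sum_eq : ∑ j, c j = #V
  card_filter_lt_le : ∀ t, #{x ∈ V | x < t} ≤ ∑ j ∈ Iio t, c j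

lemma IsPartitionOn.isDominatingOn_sizeAtMin (hP : IsPartitionOn V P) :
    IsDominatingOn V (sizeAtMin P) where
  support_subset j hj := by
    obtain ⟨p, hp, hjp⟩ := hP.sizeAtMin_ne_zero_iff.1 hj
    exact hP.subset hp hjp.1
  sum_eq := by
    have hall : P.filter (fun p : Finset (Fin k) => ∃ j ∈ univ, IsLeast ↑p j) = P :=
      filter_true_of_mem fun p hp =>
        ⟨p.min' (hP.nonempty p hp), mem_univ _, p.isLeast_min' _⟩
    rw [hP.sum_sizeAtMin, hall, ← card_biUnion hP.disjoint, ← sup_eq_biUnion, ← hP.sup_eq]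
    rfl
  card_filter_lt_le t := by
    rw [hP.sum_sizeAtMin]
    refine (card_le_card fun x hx => ?_).trans card_biUnion_le
    obtain ⟨hxV, hxt⟩ := mem_filter.1 hx
    obtain ⟨p, hp, hxp⟩ := hP.mem_iff.1 hxV
    have hmin := p.isLeast_min' ⟨x, hxp⟩
    exact mem_biUnion.2 ⟨p, mem_filter.2 ⟨hp, _, mem_Iio.2 ((hmin.2 hxp).trans_lt hxt), hmin⟩,
      hxp⟩

lemma IsPartitionOn.card_filter_card_eq (hP : IsPartitionOn V P) {s : ℕ} (hs : s ≠ 0) :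
    #{p ∈ P | #p = s} = #{j | sizeAtMin P j = s} := by
  refine card_bij (fun p hp => p.min' (hP.nonempty p (mem_filter.1 hp).1)) (fun p hp => ?_)
    (fun p hp q hq hpq => ?_) fun j hj => ?_
  · obtain ⟨hp', rfl⟩ := mem_filter.1 hp
    exact mem_filter.2 ⟨mem_univ _, hP.sizeAtMin_eq_card hp' (p.isLeast_min' _)⟩
  · exact hP.eq_of_mem_of_mem (mem_filter.1 hp).1 (mem_filter.1 hq).1 (p.min'_mem _)
      (hpq ▸ q.min'_mem _)
  · have hj := (mem_filter.1 hj).2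
    obtain ⟨p, hp, hjp⟩ := hP.sizeAtMin_ne_zero_iff.1 (hj ▸ hs)
    refine ⟨p, mem_filter.2 ⟨hp, hP.sizeAtMin_eq_card hp hjp ▸ hj⟩, ?_⟩
    exact (p.isLeast_min' _).unique hjp

lemma IsNonCrossing.subset (h : IsNonCrossing k P) (hQ : Q ⊆ P) : IsNonCrossing k Q :=
  fun ⟨a, b, c, d, hab, hbc, hcd, p, hp, q, hq, hrest⟩ =>
    h ⟨a, b, c, d, hab, hbc, hcd, p, hQ hp, q, hQ hq, hrest⟩

lemma IsNonCrossing.insert (h : IsNonCrossing k P)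
    (hB : ∀ q ∈ P, ∀ y ∈ q, ∀ b ∈ B, ∀ c ∈ B, b < y → y < c → False) :
    IsNonCrossing k (insert B P) := by
  rintro ⟨a, b, c, d, hab, hbc, hcd, p, hp, q, hq, hpq, hap, hcp, hbq, hdq⟩
  rcases mem_insert.1 hp with rfl | hp <;> rcases mem_insert.1 hq with hqB | hq
  · exact hpq hqB.symm
  · exact hB q hq b hbq a hap c hcp hab hbc
  · exact hB p hp c hcp b (hqB ▸ hbq) d (hqB ▸ hdq) hbc hcd
  · exact h ⟨a, b, c, d, hab, hbc, hcd, p, hp, q, hq, hpq, hap, hcp, hbq, hdq⟩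

/-- An element skipped by the block would lie in a block starting earlier, crossing it. -/
lemma IsPartitionOn.isInitialSegment_of_isNonCrossing (hP : IsPartitionOn V P)
    (hnc : IsNonCrossing k P) (hp : p ∈ P) (hm : IsLeast (p : Set (Fin k)) m)
    (hmax : ∀ q ∈ P, ∀ j, IsLeast (q : Set (Fin k)) j → j ≤ m) :
    IsInitialSegment {x ∈ V | m ≤ x} p := by
  refine ⟨fun x hx => mem_filter.2 ⟨hP.subset hp hx, hm.2 hx⟩, fun y hy x hx hyx => ?_⟩
  obtain ⟨hyV, hmy⟩ := mem_filter.1 hy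
  by_contra hyp
  obtain ⟨q, hq, hyq⟩ := hP.mem_iff.1 hyV
  have hqp : q ≠ p := by rintro rfl; exact hyp hyq
  have hleast := q.isLeast_min' ⟨y, hyq⟩
  have hm'm : q.min' ⟨y, hyq⟩ < m := lt_of_le_of_ne (hmax q hq _ hleast) fun h =>
    hqp (hP.eq_of_mem_of_mem hq hp (h ▸ hleast.1) hm.1)
  have hmy' : m < y := lt_of_le_of_ne hmy (by rintro rfl; exact hyp hm.1)
  have hyx' : y < x := lt_of_le_of_ne hyx (by rintro rfl; exact hyp hx)
  exact hnc ⟨_, m, y, x, hm'm, hmy', hyx', q, hq, p, hp, hqp, hleast.1, hyq, hm.1, hx⟩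

lemma IsDominatingOn.le_card_filter_le {c : Fin k → ℕ} (hc : IsDominatingOn V c)
    (m : Fin k) : c m ≤ #{x ∈ V | m ≤ x} := by
  have hsplit : #{x ∈ V | x < m} + #{x ∈ V | m ≤ x} = #V := by
    simpa only [not_lt] using card_filter_add_card_filter_not (s := V) (· < m)
  have hle : ∑ j ∈ Iio m, c j + c m ≤ ∑ j, c j := by
    rw [add_comm, ← sum_insert notMem_Iio_self]
    exact sum_le_sum_of_subset (subset_univ _)
  have := hc.card_filter_lt_le m
  have := hc.sum_eq
  omega

lemma IsDominatingOn.sdiff {c : Fin k → ℕ} (hc : IsDominatingOn V c)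
    (hmax : ∀ j, c j ≠ 0 → j ≤ m) (hBV : B ⊆ V) (hBm : ∀ x ∈ B, m ≤ x)
    (hB : #B = c m) :
    IsDominatingOn (V \ B) (update c m 0) := by
  have hsum : ∑ j, update c m 0 j = #(V \ B) := by
    have := hc.sum_eq
    rw [sum_update_of_mem (mem_univ m), sdiff_singleton_eq_erase, card_sdiff_of_subset hBV, hB,
      ← this, ← add_sum_erase univ c (mem_univ m)]
    omega
  refine ⟨fun j hj => ?_, hsum, fun t => ?_⟩
  · have hjm : j ≠ m := by rintro rfl; simp at hj
    rw [update_of_ne hjm] at hj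
    exact mem_sdiff.2 ⟨hc.support_subset j hj,
      fun hjB => hjm (le_antisymm (hmax j hj) (hBm j hjB))⟩
  rcases le_or_gt t m with htm | hmt
  · calc #{x ∈ V \ B | x < t} ≤ #{x ∈ V | x < t} :=
          card_le_card (filter_subset_filter _ sdiff_subset)
      _ ≤ ∑ j ∈ Iio t, c j := hc.card_filter_lt_le t
      _ = ∑ j ∈ Iio t, update c m 0 j := sum_congr rfl fun j hj =>
          (update_of_ne ((mem_Iio.1 hj).trans_le htm).ne _ _).symm
  · calc #{x ∈ V \ B | x < t} ≤ #(V \ B) := card_filter_le _ _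
      _ = ∑ j ∈ Iio t, update c m 0 j := by
          rw [← hsum]
          refine (sum_subset (subset_univ _) fun j _ hj => ?_).symm
          have hmj : m < j := hmt.trans_le (not_lt.1 (mt mem_Iio.2 hj))
          rw [update_of_ne hmj.ne']
          by_contra hcj
          exact (hmax j hcj).not_gt hmj

theorem existsUnique_isNonCrossing_sizeAtMin (V : Finset (Fin k)) (c : Fin k → ℕ)
    (hc : IsDominatingOn V c) :
    ∃! P, IsPartitionOn V P ∧ IsNonCrossing k P ∧ sizeAtMin P = c := by
  induction V using Finset.strongInduction generalizing c with
  | H V ih =>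
  rcases V.eq_empty_or_nonempty with rfl | hV
  · have hc0 : c = 0 :=
      funext fun j => by_contra fun hj => notMem_empty j (hc.support_subset j hj)
    refine ⟨∅, ⟨⟨by simp, by simp, by simp⟩, ?_, ?_⟩, fun Q hQ => hQ.1.eq_empty⟩
    · rintro ⟨-, -, -, -, -, -, -, p, hp, -⟩
      exact notMem_empty p hp
    · rw [hc0]
      exact funext fun j => sum_empty
  have hsupp : (univ.filter fun j => c j ≠ 0).Nonempty := by
    obtain ⟨j, -, hj⟩ := exists_ne_zero_of_sum_ne_zero (hc.sum_eq ▸ hV.card_pos.ne')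
    exact ⟨j, mem_filter.2 ⟨mem_univ j, hj⟩⟩
  set m := (univ.filter fun j => c j ≠ 0).max' hsupp
  have hm : c m ≠ 0 := (mem_filter.1 (max'_mem _ hsupp)).2
  have hmax : ∀ j, c j ≠ 0 → j ≤ m := fun j hj =>
    le_max' _ j (mem_filter.2 ⟨mem_univ j, hj⟩)
  obtain ⟨B, hB, hBcard⟩ := exists_isInitialSegment_card_eq (hc.le_card_filter_le m)
  have hBV : B ⊆ V := fun x hx => (mem_filter.1 (hB.1 hx)).1
  have hBm : ∀ x ∈ B, m ≤ x := fun x hx => (mem_filter.1 (hB.1 hx)).2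
  have hmB : IsLeast (B : Set (Fin k)) m := by
    obtain ⟨x, hx⟩ := card_ne_zero.1 (hBcard ▸ hm)
    exact ⟨hB.2 m (mem_filter.2 ⟨hc.support_subset m hm, le_rfl⟩) x hx (hBm x hx), hBm⟩
  obtain ⟨P, ⟨hP, hncP, hcP⟩, huniq⟩ :=
    ih (V \ B) (sdiff_ssubset hBV ⟨m, hmB.1⟩) _ (hc.sdiff hmax hBV hBm hBcard)
  have hPB : ∀ q ∈ P, q ⊆ V \ B := fun q hq => hP.subset hq
  refine ⟨insert B P, ⟨hP.insert ⟨m, hmB.1⟩ hBV, hncP.insert ?_, ?_⟩, ?_⟩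
  · intro q hq y hy b hb d hd hby hyd
    have hyB : y ∈ B := hB.2 y (mem_filter.2 ⟨(mem_sdiff.1 (hPB q hq hy)).1,
      (hBm b hb).trans hby.le⟩) d hd hyd.le
    exact (mem_sdiff.1 (hPB q hq hy)).2 hyB
  · rw [sizeAtMin_insert hmB fun q hq hmq => (mem_sdiff.1 (hPB q hq hmq)).2 hmB.1, hcP,
      update_idem, hBcard, update_eq_self]
  · rintro Q ⟨hQ, hncQ, rfl⟩
    obtain ⟨q, hq, hqm⟩ := hQ.sizeAtMin_ne_zero_iff.1 hm
    have hqB : q = B := (hQ.isInitialSegment_of_isNonCrossing hncQ hq hqm fun r hr j hj =>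
        hmax j (hQ.sizeAtMin_ne_zero_iff.2 ⟨r, hr, hj⟩)).eq_of_card_eq hB
      (by rw [hBcard, hQ.sizeAtMin_eq_card hq hqm])
    subst hqB
    rw [← insert_erase hq,
      huniq _ ⟨hQ.erase hq, hncQ.subset (erase_subset _ _), hQ.sizeAtMin_erase hq hqm⟩]

end Partitions

section Words

variable {k n : ℕ} {α : Fin k → ℕ}

def IsDominating (w : Fin n → ℕ) : Prop :=
  ∀ t : Fin n, (t : ℕ) ≤ ∑ j ∈ Iio t, w j

lemma isDominatingOn_univ_iff {c : Fin k → ℕ} :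
    IsDominatingOn univ c ↔ IsDominating c ∧ ∑ j, c j = k := by
  have hprefix : ∀ t : Fin k, #{x ∈ (univ : Finset (Fin k)) | x < t} = t := fun t => by
    rw [filter_gt_eq_Iio, Fin.card_Iio]
  refine ⟨fun hc => ⟨fun t => hprefix t ▸ hc.card_filter_lt_le t, by simpa using hc.sum_eq⟩,
    fun ⟨hdom, hsum⟩ => ⟨fun j _ => mem_univ j, by simpa using hsum, fun t => ?_⟩⟩
  rw [hprefix]
  exact hdom t

noncomputable def wordsWithContent (k n : ℕ) (α : Fin k → ℕ) : Finset (Fin n → ℕ) :=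
  {w ∈ Fintype.piFinset fun _ => range (k + 1) | ∀ i : Fin k, #{j | w j = (i : ℕ) + 1} = α i}

lemma mem_wordsWithContent {w : Fin n → ℕ} :
    w ∈ wordsWithContent k n α ↔
      (∀ j, w j ≤ k) ∧ ∀ i : Fin k, #{j | w j = (i : ℕ) + 1} = α i := by
  simp only [wordsWithContent, mem_filter, Fintype.mem_piFinset, mem_range, Nat.lt_succ_iff]

lemma sum_eq_of_mem_wordsWithContent (hα : ∑ i : Fin k, ((i : ℕ) + 1) * α i = k)
    {w : Fin n → ℕ} (hw : w ∈ wordsWithContent k n α) : ∑ j, w j = k := by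
  obtain ⟨hbound, hcontent⟩ := mem_wordsWithContent.1 hw
  calc ∑ j, w j = ∑ v ∈ range (k + 1), ∑ j with w j = v, w j :=
        (sum_fiberwise_of_maps_to (fun j _ => mem_range.2 (Nat.lt_succ_of_le (hbound j))) _).symm
    _ = ∑ v ∈ range (k + 1), v * #{j | w j = v} := sum_congr rfl fun v _ => by
        rw [sum_congr rfl fun j hj => (mem_filter.1 hj).2, sum_const, smul_eq_mul, mul_comm]
    _ = ∑ i : Fin k, ((i : ℕ) + 1) * #{j | w j = (i : ℕ) + 1} := by
        rw [sum_range_succ', Fin.sum_univ_eq_sum_range (fun i => (i + 1) * #{j | w j = i + 1})]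
        simp
    _ = k := by simp only [hcontent, hα]

lemma comp_perm_mem_wordsWithContent {w : Fin n → ℕ} (hw : w ∈ wordsWithContent k n α)
    (σ : Equiv.Perm (Fin n)) : w ∘ σ ∈ wordsWithContent k n α := by
  obtain ⟨hbound, hcontent⟩ := mem_wordsWithContent.1 hw
  refine mem_wordsWithContent.2 ⟨fun j => hbound (σ j), fun i => ?_⟩
  rw [← hcontent i]
  exact card_equiv σ fun j => by simp

end Words

theorem card_nonCrossing_eq_card_filter_isDominating {k : ℕ} {α : Fin k → ℕ}
    (hα : ∑ i : Fin k, ((i : ℕ) + 1) * α i = k) :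
    #{P : Finset (Finset (Fin k)) | IsPartitionOf k P ∧ IsNonCrossing k P ∧
        ∀ i : Fin k, #{p ∈ P | #p = (i : ℕ) + 1} = α i}
      = #{c ∈ wordsWithContent k k α | IsDominating c} := by
  refine card_bij (fun P _ => sizeAtMin P) (fun P hP => ?_) (fun P₁ hP₁ P₂ hP₂ heq => ?_)
    fun c hc => ?_
  · obtain ⟨-, hP, -, hcontent⟩ := mem_filter.1 hP
    rw [← isPartitionOn_univ_iff] at hP
    obtain ⟨hdom, hsum⟩ := isDominatingOn_univ_iff.1 hP.isDominatingOn_sizeAtMin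
    refine mem_filter.2 ⟨mem_wordsWithContent.2 ⟨fun j => ?_, fun i => ?_⟩, hdom⟩
    · exact (single_le_sum (fun j _ => Nat.zero_le (sizeAtMin P j)) (mem_univ j)).trans hsum.le
    · exact (hP.card_filter_card_eq (Nat.succ_ne_zero _)).symm.trans (hcontent i)
  · obtain ⟨-, hP₁, hnc₁, -⟩ := mem_filter.1 hP₁
    obtain ⟨-, hP₂, hnc₂, -⟩ := mem_filter.1 hP₂
    rw [← isPartitionOn_univ_iff] at hP₁ hP₂
    exact (existsUnique_isNonCrossing_sizeAtMin univ _ hP₁.isDominatingOn_sizeAtMin).unique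
      ⟨hP₁, hnc₁, rfl⟩ ⟨hP₂, hnc₂, heq.symm⟩
  · obtain ⟨hc, hdom⟩ := mem_filter.1 hc
    obtain ⟨P, ⟨hP, hnc, rfl⟩, -⟩ := existsUnique_isNonCrossing_sizeAtMin univ c
      (isDominatingOn_univ_iff.2 ⟨hdom, sum_eq_of_mem_wordsWithContent hα hc⟩)
    refine ⟨P, mem_filter.2 ⟨mem_univ P, isPartitionOn_univ_iff.1 hP, hnc, fun i => ?_⟩,
      rfl⟩
    exact (hP.card_filter_card_eq (Nat.succ_ne_zero _)).trans ((mem_wordsWithContent.1 hc).2 i)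

section Snoc

variable {k n : ℕ} {α : Fin k → ℕ}

lemma isDominating_snoc_iff (c : Fin n → ℕ) (x : ℕ) :
    IsDominating (Fin.snoc c x : Fin (n + 1) → ℕ) ↔ IsDominating c ∧ n ≤ ∑ j, c j := by
  simp only [IsDominating, Fin.forall_fin_succ', Fin.Iio_castSucc, Fin.Iio_last_eq_map, sum_map,
    Fin.coe_castSuccEmb, Fin.snoc_castSucc, Fin.val_castSucc, Fin.val_last]

lemma IsDominating.last_eq_zero {w : Fin (n + 1) → ℕ} (hw : IsDominating w)
    (hsum : ∑ j, w j = n) : w (Fin.last n) = 0 := by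
  rw [← Fin.snoc_init_self w, isDominating_snoc_iff] at hw
  rw [Fin.sum_univ_castSucc] at hsum
  have := hw.2
  simp only [Fin.init] at this
  omega

lemma card_filter_snoc_eq {c : Fin n → ℕ} {v : ℕ} (hv : v ≠ 0) :
    #{j | (Fin.snoc c 0 : Fin (n + 1) → ℕ) j = v} = #{j | c j = v} := by
  simp only [card_filter, Fin.sum_univ_castSucc, Fin.snoc_castSucc, Fin.snoc_last,
    if_neg hv.symm, add_zero]

lemma card_filter_isDominating_snoc (hα : ∑ i : Fin k, ((i : ℕ) + 1) * α i = k) :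
    #{c ∈ wordsWithContent k k α | IsDominating c}
      = #{w ∈ wordsWithContent k (k + 1) α | IsDominating w} := by
  have snoc_init {w : Fin (k + 1) → ℕ} (hw : w ∈ wordsWithContent k (k + 1) α)
      (hdom : IsDominating w) : Fin.snoc (Fin.init w) 0 = w := by
    rw [← hdom.last_eq_zero (sum_eq_of_mem_wordsWithContent hα hw), Fin.snoc_init_self]
  refine card_nbij' (fun c => Fin.snoc c 0) Fin.init (fun c hc => ?_) (fun w hw => ?_)
    (fun c _ => Fin.init_snoc _ _) fun w hw =>
      snoc_init (mem_filter.1 hw).1 (mem_filter.1 hw).2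
  · obtain ⟨hc, hdom⟩ := mem_filter.1 hc
    obtain ⟨hbound, hcontent⟩ := mem_wordsWithContent.1 hc
    have hbound' : ∀ j, (Fin.snoc c 0 : Fin (k + 1) → ℕ) j ≤ k :=
      Fin.lastCases (by simp) fun j => by simpa using hbound j
    exact mem_filter.2 ⟨mem_wordsWithContent.2 ⟨hbound', fun i =>
      (card_filter_snoc_eq (Nat.succ_ne_zero _)).trans (hcontent i)⟩,
      (isDominating_snoc_iff c 0).2 ⟨hdom, (sum_eq_of_mem_wordsWithContent hα hc).ge⟩⟩
  · obtain ⟨hw, hdom⟩ := mem_filter.1 hw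
    have hsnoc := snoc_init hw hdom
    rw [← hsnoc] at hw hdom
    obtain ⟨hbound, hcontent⟩ := mem_wordsWithContent.1 hw
    refine mem_filter.2 ⟨mem_wordsWithContent.2 ⟨fun j => ?_, fun i => ?_⟩,
      ((isDominating_snoc_iff _ 0).1 hdom).1⟩
    · simpa using hbound j.castSucc
    · exact (card_filter_snoc_eq (Nat.succ_ne_zero _)).symm.trans (hcontent i)

end Snoc

section Cycle

open Fin.NatCast

variable {n : ℕ} (w : Fin (n + 1) → ℕ)

/-- Partial sums of the periodic extension of `w`: the cast `ℕ → Fin (n + 1)` wraps around. -/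
def cyclicSum (t : ℕ) : ℕ :=
  ∑ j ∈ range t, w j

lemma cyclicSum_add_period (t : ℕ) : cyclicSum w (n + 1 + t) = ∑ j, w j + cyclicSum w t := by
  have hwrap (x : ℕ) : ((n + 1 + x : ℕ) : Fin (n + 1)) = x := by
    rw [Nat.cast_add, Fin.natCast_self, zero_add]
  rw [cyclicSum, sum_range_add, ← Fin.sum_univ_eq_sum_range (fun j : ℕ => w j) (n + 1)]
  simp only [Fin.cast_val_eq_self, hwrap, cyclicSum]

lemma cyclicSum_add (s u : Fin (n + 1)) :
    cyclicSum w (s + u) = cyclicSum w s + ∑ j ∈ Iio u, w (s + j) := by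
  rw [cyclicSum, sum_range_add, cyclicSum, ← Nat.Iio_eq_range u, ← Fin.map_valEmbedding_Iio,
    sum_map]
  simp only [Fin.valEmbedding_apply, Nat.cast_add, Fin.cast_val_eq_self]

lemma isDominating_rotate_iff (s : Fin (n + 1)) :
    IsDominating (fun j => w (s + j)) ↔
      ∀ u : Fin (n + 1), cyclicSum w s + u ≤ cyclicSum w (s + u) := by
  simp only [IsDominating, cyclicSum_add, add_le_add_iff_left]

variable {w}

/-- For `f t = cyclicSum w t - t`, dominance at `s` and at `s'` would give
`f s ≤ f s' ≤ f (s + n + 1)`, but `f` drops by one over a period. -/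
lemma not_isDominating_rotate_of_lt (hw : ∑ j, w j = n) {s s' : Fin (n + 1)} (hss' : s < s')
    (hs : IsDominating (fun j => w (s + j))) : ¬ IsDominating (fun j => w (s' + j)) := by
  intro hs'
  have h₁ := (isDominating_rotate_iff w s).1 hs ⟨s' - s, by omega⟩
  have h₂ := (isDominating_rotate_iff w s').1 hs' ⟨s + (n + 1) - s', by omega⟩
  have h₃ := cyclicSum_add_period w s
  simp only at h₁ h₂
  rw [show (s : ℕ) + (s' - s) = s' by omega] at h₁
  rw [show (s' : ℕ) + (s + (n + 1) - s') = n + 1 + s by omega] at h₂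
  omega

theorem existsUnique_isDominating_rotate (hw : ∑ j, w j = n) :
    ∃! s : Fin (n + 1), IsDominating (fun j => w (s + j)) := by
  have hmin : ∃ t ≤ n, ∀ v ≤ n, (cyclicSum w t : ℤ) - t ≤ cyclicSum w v - v := by
    obtain ⟨t, ht, hmin⟩ := (range (n + 1)).exists_min_image
      (fun t => (cyclicSum w t : ℤ) - t) nonempty_range_add_one
    exact ⟨t, Nat.lt_succ_iff.1 (mem_range.1 ht), fun v hv => hmin v (mem_range.2 (by omega))⟩
  -- the first minimiser of `cyclicSum w t - t` over one period
  obtain ⟨hs₀n, hs₀min⟩ := Nat.find_spec hmin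
  have hbefore : ∀ v < Nat.find hmin,
      (cyclicSum w (Nat.find hmin) : ℤ) - Nat.find hmin < cyclicSum w v - v := by
    intro v hv
    obtain ⟨v', hv', hlt⟩ := not_forall₂.1 ((not_and.1 (Nat.find_min hmin hv)) (by omega))
    exact (hs₀min v' hv').trans_lt (not_le.1 hlt)
  have hs₀ : IsDominating (fun j => w (⟨Nat.find hmin, by omega⟩ + j)) := by
    refine (isDominating_rotate_iff w _).2 fun u => ?_
    dsimp only
    by_cases hwrap : Nat.find hmin + u ≤ n
    · have := hs₀min _ hwrap
      omega
    · have := hbefore (Nat.find hmin + u - (n + 1)) (by omega)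
      have := cyclicSum_add_period w (Nat.find hmin + u - (n + 1))
      rw [show n + 1 + (Nat.find hmin + u - (n + 1)) = Nat.find hmin + u by omega] at this
      omega
  refine ⟨_, hs₀, fun s hs => le_antisymm ?_ ?_⟩
  · exact not_lt.1 fun h => not_isDominating_rotate_of_lt hw h hs₀ hs
  · exact not_lt.1 fun h => not_isDominating_rotate_of_lt hw h hs hs₀

/-- Double count the pairs `(w, s)` such that `w` rotated by `s` is dominating. -/
lemma card_eq_mul_card_filter_isDominating (S : Finset (Fin (n + 1) → ℕ))
    (hrot : ∀ w ∈ S, ∀ s, (fun j => w (s + j)) ∈ S) (hsum : ∀ w ∈ S, ∑ j, w j = n) :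
    #S = (n + 1) * #{w ∈ S | IsDominating w} := by
  calc #S = ∑ w ∈ S, #{s | IsDominating (fun j => w (s + j))} := by
        rw [card_eq_sum_ones]
        refine sum_congr rfl fun w hw => ?_
        rw [eq_comm, ← Fintype.existsUnique_iff_card_one]
        exact existsUnique_isDominating_rotate (hsum w hw)
    _ = ∑ s : Fin (n + 1), #{w ∈ S | IsDominating (fun j => w (s + j))} := by
        simp only [card_filter]
        exact sum_comm
    _ = ∑ _s : Fin (n + 1), #{w ∈ S | IsDominating w} := by
        refine sum_congr rfl fun s _ => card_nbij' (fun w j => w (s + j))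
          (fun w j => w (-s + j)) (fun w hw => ?_) (fun w hw => ?_) (fun w _ => ?_) fun w _ => ?_
        · obtain ⟨hw, hdom⟩ := mem_filter.1 hw
          exact mem_filter.2 ⟨hrot w hw s, hdom⟩
        · obtain ⟨hw, hdom⟩ := mem_filter.1 hw
          refine mem_filter.2 ⟨hrot w hw (-s), ?_⟩
          simpa only [neg_add_cancel_left] using hdom
        · simp only [add_neg_cancel_left]
        · simp only [neg_add_cancel_left]
    _ = (n + 1) * #{w ∈ S | IsDominating w} := by simp

end Cycle

section Embeddings

variable {k n : ℕ} {α : Fin k → ℕ}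

/-- Placements of `α i` distinguishable letters of colour `i` into `n` positions. -/
abbrev Placement (α : Fin k → ℕ) (n : ℕ) : Type :=
  (Σ i : Fin k, Fin (α i)) ↪ Fin n

noncomputable def wordOf (ι : Placement α n) : Fin n → ℕ :=
  extend ι (fun s => (s.1 : ℕ) + 1) 0

lemma wordOf_apply (ι : Placement α n) (s : Σ i : Fin k, Fin (α i)) :
    wordOf ι (ι s) = s.1 + 1 :=
  ι.injective.extend_apply _ _ _

lemma wordOf_of_notMem_range {ι : Placement α n} {j : Fin n}
    (hj : ¬ ∃ s, ι s = j) : wordOf ι j = 0 :=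
  extend_apply' _ _ _ hj

lemma wordOf_eq_succ_iff {ι : Placement α n} {j : Fin n} {i : Fin k} :
    wordOf ι j = (i : ℕ) + 1 ↔ ∃ t, ι ⟨i, t⟩ = j := by
  by_cases hj : ∃ s, ι s = j
  · obtain ⟨⟨i', t⟩, rfl⟩ := hj
    rw [wordOf_apply]
    constructor
    · intro h
      obtain rfl : i' = i := Fin.ext (by simpa using h)
      exact ⟨t, rfl⟩
    · rintro ⟨t', ht'⟩
      rw [(Sigma.mk.inj_iff.1 (ι.injective ht')).1]
  · rw [wordOf_of_notMem_range hj]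
    exact ⟨fun h => absurd h.symm (Nat.succ_ne_zero _),
      fun ⟨t, ht⟩ => absurd ⟨_, ht⟩ hj⟩

lemma wordOf_mem_wordsWithContent (ι : Placement α n) :
    wordOf ι ∈ wordsWithContent k n α := by
  refine mem_wordsWithContent.2 ⟨fun j => ?_, fun i => ?_⟩
  · by_cases hj : ∃ s, ι s = j
    · obtain ⟨s, rfl⟩ := hj
      rw [wordOf_apply]
      exact s.1.isLt
    · rw [wordOf_of_notMem_range hj]
      exact Nat.zero_le k
  · calc #{j | wordOf ι j = (i : ℕ) + 1} = #(univ.map ((Embedding.sigmaMk i).trans ι)) := by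
          congr 1
          ext j
          simp [wordOf_eq_succ_iff]
      _ = α i := by simp

lemma wordOf_eq_iff {ι : Placement α n} {w : Fin n → ℕ}
    (hw : w ∈ wordsWithContent k n α) : wordOf ι = w ↔ ∀ s, w (ι s) = s.1 + 1 := by
  obtain ⟨hbound, hcontent⟩ := mem_wordsWithContent.1 hw
  refine ⟨by rintro rfl s; exact wordOf_apply ι s, fun h => funext fun j => ?_⟩
  by_cases hj : ∃ s, ι s = j
  · obtain ⟨s, rfl⟩ := hj
    rw [wordOf_apply, h]
  rw [wordOf_of_notMem_range hj]
  by_contra hwj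
  -- the `α i` letters of colour `i` fill all `α i` positions where `w` reads `i + 1`
  let i : Fin k := ⟨w j - 1, by have := hbound j; omega⟩
  have hwi : w j = (i : ℕ) + 1 := by simp only [i]; omega
  obtain ⟨t, -, ht⟩ := surj_on_of_inj_on_of_card_le (s := univ) (t := {j | w j = (i : ℕ) + 1})
    (fun t _ => ι ⟨i, t⟩) (fun t _ => mem_filter.2 ⟨mem_univ _, h _⟩)
    (fun _ _ _ _ h => ((Embedding.sigmaMk i).trans ι).injective h) (by simp [hcontent i])
    j (mem_filter.2 ⟨mem_univ j, hwi⟩)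
  exact hj ⟨_, ht.symm⟩

def placementsEquiv (w : Fin n → ℕ) :
    {ι : Placement α n // ∀ s, w (ι s) = s.1 + 1}
      ≃ ∀ i : Fin k, Fin (α i) ↪ {j // w j = (i : ℕ) + 1} where
  toFun ι i := ⟨fun t => ⟨ι.1 ⟨i, t⟩, ι.2 _⟩,
    fun _ _ h => ((Embedding.sigmaMk i).trans ι.1).injective (Subtype.ext_iff.1 h)⟩
  invFun g := ⟨⟨fun s => g s.1 s.2, by
    rintro ⟨i, t⟩ ⟨i', t'⟩ h
    obtain rfl : i = i' := Fin.ext (by simpa [(g i t).2, (g i' t').2] using congrArg w h)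
    exact congrArg _ ((g i).injective (Subtype.ext h))⟩, fun s => (g s.1 s.2).2⟩
  left_inv _ := rfl
  right_inv _ := rfl

lemma card_filter_wordOf_eq {w : Fin n → ℕ} (hw : w ∈ wordsWithContent k n α) :
    #{ι : Placement α n | wordOf ι = w} = ∏ i, (α i).factorial := by
  rw [← Fintype.card_subtype, Fintype.card_congr
    ((Equiv.subtypeEquivRight fun ι => wordOf_eq_iff hw).trans (placementsEquiv w)),
    Fintype.card_pi]
  refine prod_congr rfl fun i _ => ?_
  rw [Fintype.card_embedding_eq, Fintype.card_fin, Fintype.card_subtype,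
    (mem_wordsWithContent.1 hw).2 i, Nat.descFactorial_self]

theorem card_wordsWithContent_mul_prod_factorial (α : Fin k → ℕ) (n : ℕ) :
    #(wordsWithContent k n α) * ∏ i, (α i).factorial = n.descFactorial (∑ i, α i) := by
  calc #(wordsWithContent k n α) * ∏ i, (α i).factorial
        = ∑ w ∈ wordsWithContent k n α, #{ι : Placement α n | wordOf ι = w} := by
          rw [sum_congr rfl fun w hw => card_filter_wordOf_eq hw, sum_const, smul_eq_mul]
    _ = Fintype.card (Placement α n) :=
          (card_eq_sum_card_fiberwise fun ι _ => wordOf_mem_wordsWithContent ι).symm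
    _ = n.descFactorial (∑ i, α i) := by
          rw [Fintype.card_embedding_eq, Fintype.card_fin, Fintype.card_sigma]
          simp

end Embeddings

/-- Kreweras: the number of non-crossing partitions of `[k]` with exactly `α i`
parts of size `i+1` equals `C(k, a-1) · (a-1)! / (α_1!⋯α_k!)`. -/
theorem stmt2 (k : ℕ) (hk : 0 < k) (α : Fin k → ℕ)
    (hα : ∑ i : Fin k, ((i : ℕ) + 1) * α i = k) (a : ℕ) (ha : a = ∑ i, α i) :
    (Finset.univ.filter (fun P : Finset (Finset (Fin k)) =>
        IsPartitionOf k P ∧ IsNonCrossing k P ∧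
        ∀ i : Fin k, (P.filter (fun p : Finset (Fin k) => p.card = (i : ℕ) + 1)).card = α i)).card
      * ∏ i, (α i).factorial
    = Nat.choose k (a - 1) * (a - 1).factorial := by
  obtain ⟨b, rfl⟩ : ∃ b, a = b + 1 := Nat.exists_eq_succ_of_ne_zero fun ha0 => by
    have hα0 : ∀ i ∈ univ, α i = 0 := sum_eq_zero_iff.1 (ha ▸ ha0)
    rw [sum_eq_zero fun i hi => by rw [hα0 i hi, mul_zero]] at hα
    omega
  have hcycle := card_eq_mul_card_filter_isDominating (wordsWithContent k (k + 1) α)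
    (fun w hw s => comp_perm_mem_wordsWithContent hw (Equiv.addLeft s))
    (fun w hw => sum_eq_of_mem_wordsWithContent hα hw)
  have hcount := card_wordsWithContent_mul_prod_factorial α (k + 1)
  rw [hcycle, ← ha, Nat.succ_descFactorial_succ, mul_assoc] at hcount
  rw [card_nonCrossing_eq_card_filter_isDominating hα, card_filter_isDominating_snoc hα,
    Nat.eq_of_mul_eq_mul_left k.succ_pos hcount, Nat.add_sub_cancel,
    Nat.descFactorial_eq_factorial_mul_choose, mul_comm]
end

section
/- For positive integers s ≤ k, the sum over all compositions (i_1,...,i_s) of k into s positive parts of the product C_{i_1-1}⋯C_{i_s-1} of Catalan numbers equals s·(2k-s-1)!/((k-s)!·k!). -/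
/-!
The composition sum is the coefficient of `X ^ k` in `(X * C) ^ s`, where `C = ∑ Cₙ Xⁿ` is the
Catalan series, i.e. the coefficient of `X ^ (k - s)` in `C ^ s`. The functional equation
`C = 1 + X * C ^ 2` gives `C ^ (s + 1) = C ^ s + X * C ^ (s + 2)`, a recurrence for these
coefficients in `s`, and the ballot numbers `s * (2m + s - 1)! / (m! * (m + s)!)` satisfy it.
-/

open Finset PowerSeries Nat

theorem catalan_mul_factorial_mul_factorial (n : ℕ) :
    catalan n * (n ! * (n + 1)!) = (2 * n)! :=
  calc catalan n * (n ! * (n + 1)!) = (n + 1) * catalan n * n ! * n ! := by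
        rw [factorial_succ]; ring
    _ = (n + n).choose n * n ! * n ! := by
        rw [succ_mul_catalan_eq_centralBinom, centralBinom_eq_two_mul_choose, two_mul]
    _ = (2 * n)! := by rw [add_choose_mul_factorial_mul_factorial, two_mul]

namespace PowerSeries

theorem coeff_pow_eq_sum_antidiagonalTuple {R : Type*} [CommSemiring R]
    (p : R⟦X⟧) (s n : ℕ) :
    coeff n (p ^ s) = ∑ i ∈ Nat.antidiagonalTuple s n, ∏ j : Fin s, coeff (i j) p := by
  rw [← Fin.prod_const, coeff_prod]
  exact sum_equiv Finsupp.equivFunOnFinite (by simp [Nat.mem_antidiagonalTuple]) (by simp)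

theorem coeff_X_mul_mk {R : Type*} [Semiring R] (f : ℕ → R) (n : ℕ) :
    coeff n (X * mk f) = if n = 0 then 0 else f (n - 1) := by
  cases n <;> simp [coeff_succ_X_mul]

theorem catalanSeries_pow_succ (s : ℕ) :
    catalanSeries ^ (s + 1) = catalanSeries ^ s + X * catalanSeries ^ (s + 2) := by
  rw [pow_succ]
  nth_rw 2 [← catalanSeries_sq_mul_X_add_one]
  ring

theorem coeff_succ_catalanSeries_pow_succ (s m : ℕ) :
    coeff (m + 1) (catalanSeries ^ (s + 1))
      = coeff (m + 1) (catalanSeries ^ s) + coeff m (catalanSeries ^ (s + 2)) := by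
  rw [catalanSeries_pow_succ, map_add, coeff_succ_X_mul]

theorem coeff_catalanSeries_pow_mul_factorial :
    ∀ {s m : ℕ}, 0 < s + m →
      coeff m (catalanSeries ^ s) * (m ! * (m + s)!) = s * (2 * m + s - 1)!
  | 0, m + 1, _ => by simp
  | 1, m, _ => by simpa using catalan_mul_factorial_mul_factorial m
  | s + 2, m, _ => by
    have hsucc := coeff_catalanSeries_pow_mul_factorial (s := s + 1) (m := m + 1) (by omega)
    have hprev := coeff_catalanSeries_pow_mul_factorial (s := s) (m := m + 1) (by omega)
    rw [coeff_succ_catalanSeries_pow_succ, show m + 1 + (s + 1) = m + s + 1 + 1 by omega,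
      show 2 * (m + 1) + (s + 1) - 1 = 2 * m + s + 1 + 1 by omega, factorial_succ m,
      factorial_succ (m + s + 1), factorial_succ (2 * m + s + 1)] at hsucc
    rw [show m + 1 + s = m + s + 1 by omega, show 2 * (m + 1) + s - 1 = 2 * m + s + 1 by omega,
      factorial_succ m] at hprev
    rw [show m + (s + 2) = m + s + 1 + 1 by omega,
      show 2 * m + (s + 2) - 1 = 2 * m + s + 1 by omega, factorial_succ (m + s + 1)]
    -- after clearing factorials: (s + 1) * (2m + s + 2) - s * (m + s + 2) = (m + 1) * (s + 2)
    refine Nat.eq_of_mul_eq_mul_left (n := m + 1) (by omega) ?_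
    linear_combination hsucc - (m + s + 1 + 1) * hprev

end PowerSeries

theorem sum_compositions_prod_eq_coeff_mk_pow {R : Type*} [CommSemiring R] (f : ℕ → R)
    {s k : ℕ} (hsk : s ≤ k) :
    ∑ i ∈ (Nat.antidiagonalTuple s k).filter (fun i => ∀ j, 0 < i j),
        ∏ j : Fin s, f (i j - 1) = coeff (k - s) (mk f ^ s) := by
  rw [← coeff_X_pow_mul, Nat.sub_add_cancel hsk, ← mul_pow, coeff_pow_eq_sum_antidiagonalTuple,
    sum_filter]
  refine sum_congr rfl fun i _ => ?_
  simp only [coeff_X_mul_mk]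
  split_ifs with hpos
  · exact prod_congr rfl fun j _ => (if_neg (hpos j).ne').symm
  · obtain ⟨j, hj⟩ := not_forall.mp hpos
    exact (prod_eq_zero (mem_univ j) (if_pos (Nat.eq_zero_of_not_pos hj) : _ = (0 : R))).symm

/-- Sum over compositions of `k` into `s` positive parts of products of Catalan
numbers: `∑ C_{i₁-1}⋯C_{i_s-1} = s·(2k-s-1)!/((k-s)!·k!)`. -/
theorem stmt7 (s k : ℕ) (hs : 1 ≤ s) (hsk : s ≤ k) :
    (∑ i ∈ (Finset.Nat.antidiagonalTuple s k).filter (fun i => ∀ j, 0 < i j),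
        ∏ j : Fin s, catalan (i j - 1))
      * ((k - s).factorial * k.factorial)
    = s * (2 * k - s - 1).factorial := by
  have h := coeff_catalanSeries_pow_mul_factorial (s := s) (m := k - s) (by omega)
  rw [Nat.sub_add_cancel hsk, show 2 * (k - s) + s - 1 = 2 * k - s - 1 by omega] at h
  rw [sum_compositions_prod_eq_coeff_mk_pow catalan hsk]
  exact h
end
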